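/- Assume 0 < m_0 ≤ M_0 for a fixed vector v ∈ ℝ^d, and suppose there exist L ∈ {1,…,k} and a closed interval [α, β] ⊂ [−τ, 0] with β − α = σ such that m_0 ≤ ⟨x_L(t), v⟩ ≤ (M_0 + m_0)/2 for all t ∈ [α, β]. Set δ⁻₂ := (1/(2(M+k−1))) (Γ/Λ) (1 − m_0/M_0) (1 − e^{−Λσ}). Then ⟨y_i(β + τ), v⟩ ≤ (1 − δ⁻₂) M_0 for every i ∈ {1,…,h}. -/

import Mathlib

open Real Set Filter Topology
open scoped BigOperators RealInnerProductSpace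

noncomputable section

/-- `Λ` : the maximum of the sup-norms of the four (positive) influence functions. -/
def Lam {d : ℕ} (ψ ψs φ φs : EuclideanSpace ℝ (Fin d) → EuclideanSpace ℝ (Fin d) → ℝ) : ℝ :=
  max
    (max (⨆ p : EuclideanSpace ℝ (Fin d) × EuclideanSpace ℝ (Fin d), ψ p.1 p.2)
         (⨆ p : EuclideanSpace ℝ (Fin d) × EuclideanSpace ℝ (Fin d), ψs p.1 p.2))
    (max (⨆ p : EuclideanSpace ℝ (Fin d) × EuclideanSpace ℝ (Fin d), φ p.1 p.2)
         (⨆ p : EuclideanSpace ℝ (Fin d) × EuclideanSpace ℝ (Fin d), φs p.1 p.2))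

/-- An influence function is admissible when it is continuous, positive and bounded. -/
def Admissible {d : ℕ} (f : EuclideanSpace ℝ (Fin d) → EuclideanSpace ℝ (Fin d) → ℝ) : Prop :=
  Continuous (fun p : EuclideanSpace ℝ (Fin d) × EuclideanSpace ℝ (Fin d) => f p.1 p.2) ∧
    (∀ z₁ z₂, 0 < f z₁ z₂) ∧
    BddAbove (Set.range fun p : EuclideanSpace ℝ (Fin d) × EuclideanSpace ℝ (Fin d) => f p.1 p.2)

/-- `(x, y)` is a global classical solution of the two-population delayed
Hegselmann–Krause system, with `k` (resp. `h`) leaders in the first (resp. second)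
population and time delay `τ`. -/
structure IsSol {d N M : ℕ} (h k : ℕ) (τ : ℝ)
    (ψ ψs φ φs : EuclideanSpace ℝ (Fin d) → EuclideanSpace ℝ (Fin d) → ℝ)
    (x : Fin N → ℝ → EuclideanSpace ℝ (Fin d))
    (y : Fin M → ℝ → EuclideanSpace ℝ (Fin d)) : Prop where
  contx : ∀ i, Continuous (x i)
  conty : ∀ j, Continuous (y j)
  odex_lead : ∀ i : Fin N, (i : ℕ) < k → ∀ t : ℝ, 0 < t →
    HasDerivAt (x i)
      ((∑ j ∈ Finset.univ.erase i,
          (ψ (x i t) (x j t) / ((N : ℝ) + h - 1)) • (x j t - x i t)) +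
        ∑ j ∈ Finset.univ.filter (fun j : Fin M => (j : ℕ) < h),
          (φ (x i t) (y j (t - τ)) / ((N : ℝ) + h - 1)) • (y j (t - τ) - x i t)) t
  odex_foll : ∀ i : Fin N, k ≤ (i : ℕ) → ∀ t : ℝ, 0 < t →
    HasDerivAt (x i)
      (∑ j ∈ Finset.univ.erase i,
          (ψ (x i t) (x j t) / ((N : ℝ) - 1)) • (x j t - x i t)) t
  odey_lead : ∀ i : Fin M, (i : ℕ) < h → ∀ t : ℝ, 0 < t →
    HasDerivAt (y i)
      ((∑ j ∈ Finset.univ.erase i,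
          (ψs (y i t) (y j t) / ((M : ℝ) + k - 1)) • (y j t - y i t)) +
        ∑ j ∈ Finset.univ.filter (fun j : Fin N => (j : ℕ) < k),
          (φs (y i t) (x j (t - τ)) / ((M : ℝ) + k - 1)) • (x j (t - τ) - y i t)) t
  odey_foll : ∀ i : Fin M, h ≤ (i : ℕ) → ∀ t : ℝ, 0 < t →
    HasDerivAt (y i)
      (∑ j ∈ Finset.univ.erase i,
          (ψs (y i t) (y j t) / ((M : ℝ) - 1)) • (y j t - y i t)) t

/-- `m_0` : the minimum of the projections on `v` of the initial data. -/
def mInit {d N M : ℕ} (h k : ℕ) (τ : ℝ) (v : EuclideanSpace ℝ (Fin d))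
    (x : Fin N → ℝ → EuclideanSpace ℝ (Fin d))
    (y : Fin M → ℝ → EuclideanSpace ℝ (Fin d)) : ℝ :=
  min
    (min (⨅ p : {i : Fin N // (i : ℕ) < k} × (Icc (-τ) (0 : ℝ)), ⟪x p.1.1 (p.2 : ℝ), v⟫)
         (⨅ i : {i : Fin N // k ≤ (i : ℕ)}, ⟪x i.1 0, v⟫))
    (min (⨅ p : {j : Fin M // (j : ℕ) < h} × (Icc (-τ) (0 : ℝ)), ⟪y p.1.1 (p.2 : ℝ), v⟫)
         (⨅ j : {j : Fin M // h ≤ (j : ℕ)}, ⟪y j.1 0, v⟫))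

/-- `M_0` : the maximum of the projections on `v` of the initial data. -/
def MInit {d N M : ℕ} (h k : ℕ) (τ : ℝ) (v : EuclideanSpace ℝ (Fin d))
    (x : Fin N → ℝ → EuclideanSpace ℝ (Fin d))
    (y : Fin M → ℝ → EuclideanSpace ℝ (Fin d)) : ℝ :=
  max
    (max (⨆ p : {i : Fin N // (i : ℕ) < k} × (Icc (-τ) (0 : ℝ)), ⟪x p.1.1 (p.2 : ℝ), v⟫)
         (⨆ i : {i : Fin N // k ≤ (i : ℕ)}, ⟪x i.1 0, v⟫))
    (max (⨆ p : {j : Fin M // (j : ℕ) < h} × (Icc (-τ) (0 : ℝ)), ⟪y p.1.1 (p.2 : ℝ), v⟫)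
         (⨆ j : {j : Fin M // h ≤ (j : ℕ)}, ⟪y j.1 0, v⟫))

/-- `C_0` : the maximum of the norms of the initial data. -/
def Cinit {d N M : ℕ} (h k : ℕ) (τ : ℝ)
    (x : Fin N → ℝ → EuclideanSpace ℝ (Fin d))
    (y : Fin M → ℝ → EuclideanSpace ℝ (Fin d)) : ℝ :=
  max
    (max (⨆ p : {i : Fin N // (i : ℕ) < k} × (Icc (-τ) (0 : ℝ)), ‖x p.1.1 (p.2 : ℝ)‖)
         (⨆ i : {i : Fin N // k ≤ (i : ℕ)}, ‖x i.1 0‖))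
    (max (⨆ p : {j : Fin M // (j : ℕ) < h} × (Icc (-τ) (0 : ℝ)), ‖y p.1.1 (p.2 : ℝ)‖)
         (⨆ j : {j : Fin M // h ≤ (j : ℕ)}, ‖y j.1 0‖))

/-- the minimum of an influence function on the ball of radius `C` (in each variable). -/
def minOnBall {d : ℕ} (C : ℝ)
    (f : EuclideanSpace ℝ (Fin d) → EuclideanSpace ℝ (Fin d) → ℝ) : ℝ :=
  ⨅ p : {z : EuclideanSpace ℝ (Fin d) × EuclideanSpace ℝ (Fin d) // ‖z.1‖ ≤ C ∧ ‖z.2‖ ≤ C},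
    f p.1.1 p.1.2

/-- `Γ := min {ψ₀, ψ*₀, φ₀, φ*₀}`. -/
def Gam {d N M : ℕ} (h k : ℕ) (τ : ℝ)
    (ψ ψs φ φs : EuclideanSpace ℝ (Fin d) → EuclideanSpace ℝ (Fin d) → ℝ)
    (x : Fin N → ℝ → EuclideanSpace ℝ (Fin d))
    (y : Fin M → ℝ → EuclideanSpace ℝ (Fin d)) : ℝ :=
  min (min (minOnBall (Cinit h k τ x y) ψ) (minOnBall (Cinit h k τ x y) ψs))
      (min (minOnBall (Cinit h k τ x y) φ) (minOnBall (Cinit h k τ x y) φs))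

/-- `m_n` : minimum of the projections on `v` over the time mesh `I_n = [(6n-1)τ, 6nτ]`. -/
def mSeq {d N M : ℕ} (h k : ℕ) (τ : ℝ) (v : EuclideanSpace ℝ (Fin d))
    (x : Fin N → ℝ → EuclideanSpace ℝ (Fin d))
    (y : Fin M → ℝ → EuclideanSpace ℝ (Fin d)) (n : ℕ) : ℝ :=
  min
    (min (⨅ p : {i : Fin N // (i : ℕ) < k} × (Icc ((6 * (n : ℝ) - 1) * τ) (6 * (n : ℝ) * τ)),
            ⟪x p.1.1 (p.2 : ℝ), v⟫)
         (⨅ i : {i : Fin N // k ≤ (i : ℕ)}, ⟪x i.1 (6 * (n : ℝ) * τ), v⟫))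
    (min (⨅ p : {j : Fin M // (j : ℕ) < h} × (Icc ((6 * (n : ℝ) - 1) * τ) (6 * (n : ℝ) * τ)),
            ⟪y p.1.1 (p.2 : ℝ), v⟫)
         (⨅ j : {j : Fin M // h ≤ (j : ℕ)}, ⟪y j.1 (6 * (n : ℝ) * τ), v⟫))

/-- `M_n` : maximum of the projections on `v` over the time mesh `I_n = [(6n-1)τ, 6nτ]`. -/
def MSeq {d N M : ℕ} (h k : ℕ) (τ : ℝ) (v : EuclideanSpace ℝ (Fin d))
    (x : Fin N → ℝ → EuclideanSpace ℝ (Fin d))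
    (y : Fin M → ℝ → EuclideanSpace ℝ (Fin d)) (n : ℕ) : ℝ :=
  max
    (max (⨆ p : {i : Fin N // (i : ℕ) < k} × (Icc ((6 * (n : ℝ) - 1) * τ) (6 * (n : ℝ) * τ)),
            ⟪x p.1.1 (p.2 : ℝ), v⟫)
         (⨆ i : {i : Fin N // k ≤ (i : ℕ)}, ⟪x i.1 (6 * (n : ℝ) * τ), v⟫))
    (max (⨆ p : {j : Fin M // (j : ℕ) < h} × (Icc ((6 * (n : ℝ) - 1) * τ) (6 * (n : ℝ) * τ)),
            ⟪y p.1.1 (p.2 : ℝ), v⟫)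
         (⨆ j : {j : Fin M // h ≤ (j : ℕ)}, ⟪y j.1 (6 * (n : ℝ) * τ), v⟫))


/-!
On `[0, τ]` the delayed inputs of the second population are initial data, so a maximum principle,
applied to `⟪·, v⟫` and to `‖·‖²`, keeps every `y j t` below `M₀` and in the ball of radius `C₀`.
For a leader `y i` on `[α + τ, β + τ]` the delayed leader `x L (t - τ)` lies at least
`(M₀ - m₀) / 2` below `M₀` with weight at least `Γ / (M + k - 1)`, whence
`d/dt ⟪y i, v⟫ ≤ Λ (M₀ - ⟪y i, v⟫) - Γ (M₀ - m₀) / (2 (M + k - 1))`; integrating this linear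
differential inequality over a window of length `σ` gives the bound.
-/
theorem HasDerivAt.eventually_nhdsGT_lt {f : ℝ → ℝ} {D r x : ℝ} (hf : HasDerivAt f D x)
    (hr : D < r) : ∀ᶠ z in 𝓝[>] x, f z < f x + r * (z - x) := by
  filter_upwards [(hf.tendsto_slope.mono_left (nhdsGT_le_nhdsNE x)).eventually_lt_const hr,
    self_mem_nhdsWithin] with z hslope (hz : x < z)
  rw [slope_def_field, div_lt_iff₀ (sub_pos.2 hz)] at hslope
  linarith

theorem sup'_le_of_hasDerivAt_nonpos_at_max {ι : Type*} [Fintype ι] [Nonempty ι]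
    {g : ι → ℝ → ℝ} {T : ℝ} (hc : ∀ i, Continuous (g i))
    (hd : ∀ t ∈ Ioc 0 T, ∀ i, (∀ j, g j t ≤ g i t) → ∃ D ≤ 0, HasDerivAt (g i) D t)
    {t : ℝ} (ht : t ∈ Icc 0 T) (i : ι) :
    g i t ≤ Finset.univ.sup' Finset.univ_nonempty (g · 0) := by
  set F : ℝ → ℝ := fun s ↦ Finset.univ.sup' Finset.univ_nonempty (g · s)
  have hF : Continuous F := continuous_iff_continuousAt.2 fun s ↦
    ContinuousAt.finset_sup'_apply _ fun j _ ↦ (hc j).continuousAt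
  have le_F : ∀ j s, g j s ≤ F s := fun j s ↦ Finset.le_sup' (g · s) (Finset.mem_univ j)
  have slope_lt : ∀ s ∈ Ioc 0 T, ∀ r > 0, ∀ᶠ z in 𝓝[>] s, F z < F s + r * (z - s) := by
    intro s hs r hr
    -- indices below the maximum stay below by continuity, maximal ones by their derivative
    have each : ∀ j, ∀ᶠ z in 𝓝[>] s, g j z < F s + r * (z - s) := by
      intro j
      rcases (le_F j s).lt_or_eq with hlt | heq
      · have hlim : Tendsto (fun z ↦ g j z - r * (z - s)) (𝓝[>] s) (𝓝 (g j s)) := by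
          simpa using (((hc j).tendsto s).sub ((tendsto_id.sub_const s).const_mul r)).mono_left
            nhdsWithin_le_nhds
        filter_upwards [hlim.eventually_lt_const hlt] with z hz
        linarith
      · obtain ⟨D, hD, hderiv⟩ := hd s hs j fun j' ↦ heq ▸ le_F j' s
        simpa [heq] using hderiv.eventually_nhdsGT_lt (hD.trans_lt hr)
    filter_upwards [eventually_all.2 each] with z hz
    exact (Finset.sup'_lt_iff _).2 fun j _ ↦ hz j
  have antitone_from : ∀ a ∈ Ioc 0 t, F t ≤ F a := by
    intro a ha
    refine image_le_of_liminf_slope_right_le_deriv_boundary (B := fun _ ↦ F a) (B' := 0)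
      hF.continuousOn le_rfl continuousOn_const (fun _ _ ↦ hasDerivWithinAt_const _ _ _)
      (fun s hs r hr ↦ ?_) ⟨ha.2, le_rfl⟩
    have hsT : s ∈ Ioc 0 T := ⟨ha.1.trans_le hs.1, hs.2.le.trans ht.2⟩
    refine Eventually.frequently ?_
    filter_upwards [slope_lt s hsT r hr, self_mem_nhdsWithin] with z hz (hsz : s < z)
    rw [slope_def_field, div_lt_iff₀ (sub_pos.2 hsz)]
    linarith
  refine (le_F i t).trans ?_
  rcases ht.1.eq_or_lt with rfl | htpos
  · exact le_rfl
  refine ge_of_tendsto ((hF.tendsto 0).mono_left (nhdsWithin_le_nhds (s := Ioi 0))) ?_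
  filter_upwards [Ioc_mem_nhdsGT htpos] with a ha using antitone_from a ha

theorem le_of_hasDerivAt_nonpos_at_max {ι : Type*} [Fintype ι]
    {g : ι → ℝ → ℝ} {T B : ℝ} (hc : ∀ i, Continuous (g i))
    (hd : ∀ t ∈ Ioc 0 T, ∀ i, B ≤ g i t → (∀ j, g j t ≤ g i t) →
      ∃ D ≤ 0, HasDerivAt (g i) D t)
    (h0 : ∀ i, g i 0 ≤ B) {t : ℝ} (ht : t ∈ Icc 0 T) (i : ι) : g i t ≤ B := by
  -- adjoin the constant `B` to the family
  let g' : Option ι → ℝ → ℝ := fun o ↦ o.elim (fun _ ↦ B) g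
  have hc' : ∀ o, Continuous (g' o) := fun o ↦ o.rec continuous_const hc
  have hd' : ∀ s ∈ Ioc 0 T, ∀ o, (∀ o', g' o' s ≤ g' o s) → ∃ D ≤ 0, HasDerivAt (g' o) D s := by
    rintro s hs (_ | j) hmax
    · exact ⟨0, le_rfl, hasDerivAt_const s B⟩
    · exact hd s hs j (hmax none) fun j' ↦ hmax (some j')
  refine (sup'_le_of_hasDerivAt_nonpos_at_max hc' hd' ht (some i)).trans ?_
  exact Finset.sup'_le _ _ fun o _ ↦ o.rec le_rfl h0

theorem le_sub_mul_one_sub_exp_of_hasDerivAt_le {f : ℝ → ℝ} {a b K c B : ℝ} (hab : a ≤ b)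
    (hK : K ≠ 0) (hf : ContinuousOn f (Icc a b))
    (hd : ∀ t ∈ Ioo a b, ∃ D ≤ K * (B - f t) - c, HasDerivAt f D t) (ha : f a ≤ B) :
    f b ≤ B - c / K * (1 - exp (-(K * (b - a)))) := by
  choose! f' hf'le hf' using hd
  let w : ℝ → ℝ := fun t ↦ (B - f t - c / K) * exp (K * (t - a))
  have hexp : ∀ t, HasDerivAt (fun s ↦ exp (K * (s - a))) (exp (K * (t - a)) * K) t :=
    fun t ↦ by simpa using (((hasDerivAt_id t).sub_const a).const_mul K).exp
  have hw : MonotoneOn w (Icc a b) := by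
    refine monotoneOn_of_hasDerivWithinAt_nonneg (convex_Icc a b)
      (f' := fun t ↦ (K * (B - f t) - c - f' t) * exp (K * (t - a)))
      (((continuousOn_const.sub hf).sub continuousOn_const).mul (by fun_prop)) ?_ ?_
    · rw [interior_Icc]
      intro t ht
      refine ((((hf' t ht).const_sub B).sub_const (c / K)).mul (hexp t)).hasDerivWithinAt
        |>.congr_deriv ?_
      linear_combination -exp (K * (t - a)) * div_mul_cancel₀ c hK
    · rw [interior_Icc]
      intro t ht
      exact mul_nonneg (by linarith [hf'le t ht]) (exp_pos _).le
  have hwab := hw (left_mem_Icc.2 hab) (right_mem_Icc.2 hab) hab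
  simp only [w, sub_self, mul_zero, exp_zero, mul_one] at hwab
  set E := exp (K * (b - a))
  have hE : 0 < E := exp_pos _
  have key : -(c / K) * E⁻¹ ≤ B - f b - c / K := by
    have := mul_le_mul_of_nonneg_right (by linarith : -(c / K) ≤ (B - f b - c / K) * E)
      (inv_nonneg.2 hE.le)
    rwa [mul_assoc, mul_inv_cancel₀ hE.ne', mul_one] at this
  rw [exp_neg]
  linarith

theorem bddAbove_range_prod_Icc {ι : Type*} [TopologicalSpace ι] [DiscreteTopology ι] [Finite ι]
    {a b : ℝ} {F : ι → ℝ → ℝ} (hF : ∀ i, Continuous (F i)) :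
    BddAbove (range fun p : ι × Icc a b ↦ F p.1 p.2) :=
  (isCompact_range (continuous_prod_of_discrete_left (f := fun p : ι × Icc a b ↦ F p.1 p.2).2
    fun i ↦ (hF i).comp continuous_subtype_val)).bddAbove

theorem div_mul_sub_le_of_le_midpoint {a n X f B m Λ Γ : ℝ} (hn : 0 < n) (ha : 0 ≤ a)
    (hΓ : Γ ≤ a) (hΛ : a ≤ Λ) (hX : X ≤ (B + m) / 2) (hf : f ≤ B) (hm : m ≤ B) :
    a / n * (X - f) ≤ Λ / n * (B - f) - Γ * (B - m) / (2 * n) := by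
  have key : a * (X - f) ≤ Λ * (B - f) - Γ * (B - m) / 2 := by
    nlinarith [mul_le_mul_of_nonneg_left (by linarith : X - B ≤ -((B - m) / 2)) ha,
      mul_le_mul_of_nonneg_right hΓ (by linarith : 0 ≤ B - m),
      mul_le_mul_of_nonneg_right hΛ (by linarith : 0 ≤ B - f)]
  calc a / n * (X - f) = a * (X - f) / n := by ring
    _ ≤ (Λ * (B - f) - Γ * (B - m) / 2) / n := by gcongr
    _ = _ := by ring

theorem map_sum_smul_sub_nonpos {E F ι : Type*} [AddCommGroup E] [Module ℝ E] [FunLike F E ℝ]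
    [LinearMapClass F ℝ E ℝ] (f : F) (s : Finset ι) {c : ι → ℝ} {w : ι → E} {z : E}
    (hc : ∀ j ∈ s, 0 ≤ c j) (hw : ∀ j ∈ s, f (w j - z) ≤ 0) :
    f (∑ j ∈ s, c j • (w j - z)) ≤ 0 := by
  rw [map_sum]
  refine Finset.sum_nonpos fun j hj ↦ ?_
  rw [map_smul, smul_eq_mul]
  exact mul_nonpos_of_nonneg_of_nonpos (hc j hj) (hw j hj)

theorem sum_mul_sub_le_card_mul {ι : Type*} (s : Finset ι) {a w : ι → ℝ} {A B f : ℝ}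
    (ha : ∀ j ∈ s, 0 ≤ a j ∧ a j ≤ A) (hw : ∀ j ∈ s, w j ≤ B) (hf : f ≤ B) :
    ∑ j ∈ s, a j * (w j - f) ≤ s.card * (A * (B - f)) := by
  rw [← nsmul_eq_mul, ← Finset.sum_const]
  refine Finset.sum_le_sum fun j hj ↦ ?_
  obtain ⟨ha0, haA⟩ := ha j hj
  calc a j * (w j - f) ≤ a j * (B - f) := by gcongr; exact hw j hj
    _ ≤ A * (B - f) := by gcongr

section HegselmannKrause

variable {d N M h k : ℕ} {τ : ℝ}
  {ψ ψs φ φs : EuclideanSpace ℝ (Fin d) → EuclideanSpace ℝ (Fin d) → ℝ}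
  {x : Fin N → ℝ → EuclideanSpace ℝ (Fin d)} {y : Fin M → ℝ → EuclideanSpace ℝ (Fin d)}

theorem ψs_le_Lam (hψs : Admissible ψs) (z w : EuclideanSpace ℝ (Fin d)) :
    ψs z w ≤ Lam ψ ψs φ φs :=
  (le_ciSup hψs.2.2 (z, w)).trans (le_max_of_le_left (le_max_right _ _))

theorem φs_le_Lam (hφs : Admissible φs) (z w : EuclideanSpace ℝ (Fin d)) :
    φs z w ≤ Lam ψ ψs φ φs :=
  (le_ciSup hφs.2.2 (z, w)).trans (le_max_of_le_right (le_max_right _ _))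

theorem minOnBall_le {C : ℝ} {f : EuclideanSpace ℝ (Fin d) → EuclideanSpace ℝ (Fin d) → ℝ}
    (hf : ∀ z w, 0 ≤ f z w) {z w : EuclideanSpace ℝ (Fin d)} (hz : ‖z‖ ≤ C) (hw : ‖w‖ ≤ C) :
    minOnBall C f ≤ f z w :=
  ciInf_le (f := fun p : {p : EuclideanSpace ℝ (Fin d) × EuclideanSpace ℝ (Fin d) //
    ‖p.1‖ ≤ C ∧ ‖p.2‖ ≤ C} ↦ f p.1.1 p.1.2) ⟨0, by rintro _ ⟨p, rfl⟩; exact hf _ _⟩ ⟨(z, w), hz, hw⟩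

theorem Gam_le_φs (hφs : ∀ z w, 0 ≤ φs z w) {z w : EuclideanSpace ℝ (Fin d)}
    (hz : ‖z‖ ≤ Cinit h k τ x y) (hw : ‖w‖ ≤ Cinit h k τ x y) :
    Gam h k τ ψ ψs φ φs x y ≤ φs z w :=
  (min_le_right _ _).trans ((min_le_right _ _).trans (minOnBall_le hφs hz hw))

def initSup (G : EuclideanSpace ℝ (Fin d) → ℝ) (h k : ℕ) (τ : ℝ)
    (x : Fin N → ℝ → EuclideanSpace ℝ (Fin d)) (y : Fin M → ℝ → EuclideanSpace ℝ (Fin d)) : ℝ :=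
  max
    (max (⨆ p : {i : Fin N // (i : ℕ) < k} × (Icc (-τ) (0 : ℝ)), G (x p.1.1 p.2))
         (⨆ i : {i : Fin N // k ≤ (i : ℕ)}, G (x i.1 0)))
    (max (⨆ p : {j : Fin M // (j : ℕ) < h} × (Icc (-τ) (0 : ℝ)), G (y p.1.1 p.2))
         (⨆ j : {j : Fin M // h ≤ (j : ℕ)}, G (y j.1 0)))

theorem MInit_eq_initSup (v : EuclideanSpace ℝ (Fin d)) :
    MInit h k τ v x y = initSup (⟪·, v⟫) h k τ x y := rfl

theorem Cinit_eq_initSup : Cinit h k τ x y = initSup (‖·‖) h k τ x y := rfl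


theorem le_initSup_of_lt {G : EuclideanSpace ℝ (Fin d) → ℝ} (hG : Continuous G)
    (hx : ∀ i, Continuous (x i)) {i : Fin N} (hi : (i : ℕ) < k) {s : ℝ} (hs : s ∈ Icc (-τ) 0) :
    G (x i s) ≤ initSup G h k τ x y :=
  (le_ciSup (bddAbove_range_prod_Icc fun i : {i : Fin N // (i : ℕ) < k} ↦ hG.comp (hx i.1))
    (⟨⟨i, hi⟩, ⟨s, hs⟩⟩ : {i : Fin N // (i : ℕ) < k} × Icc (-τ) (0 : ℝ))).trans
    (le_max_of_le_left (le_max_left _ _))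

theorem le_initSup_zero {G : EuclideanSpace ℝ (Fin d) → ℝ} (hG : Continuous G)
    (hy : ∀ j, Continuous (y j)) (hτ : 0 ≤ τ) (j : Fin M) :
    G (y j 0) ≤ initSup G h k τ x y := by
  rcases lt_or_ge (j : ℕ) h with hj | hj
  · exact (le_ciSup (bddAbove_range_prod_Icc fun j : {j : Fin M // (j : ℕ) < h} ↦ hG.comp (hy j.1))
      (⟨⟨j, hj⟩, ⟨0, by simpa using hτ, le_rfl⟩⟩ :
        {j : Fin M // (j : ℕ) < h} × Icc (-τ) (0 : ℝ))).trans
      (le_max_of_le_right (le_max_left _ _))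
  · exact (le_ciSup (f := fun j : {j : Fin M // h ≤ (j : ℕ)} ↦ G (y j.1 0))
      (Set.finite_range _).bddAbove ⟨j, hj⟩).trans
      (le_max_of_le_right (le_max_right _ _))


-- At a maximal `y j` the other agents and the delayed leaders lie in the sublevel set of `G`
-- through `y j`, so by `hG'` every interaction term has nonpositive `G'`-derivative.
theorem IsSol.y_le_of_quasiconvex (hsol : IsSol h k τ ψ ψs φ φs x y)
    (hψs : ∀ z w, 0 ≤ ψs z w) (hφs : ∀ z w, 0 ≤ φs z w)
    {G : EuclideanSpace ℝ (Fin d) → ℝ}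
    {G' : EuclideanSpace ℝ (Fin d) → EuclideanSpace ℝ (Fin d) →L[ℝ] ℝ}
    (hG : ∀ z, HasFDerivAt G (G' z) z) (hG' : ∀ z w, G w ≤ G z → G' z (w - z) ≤ 0) {B : ℝ}
    (hx : ∀ i : Fin N, (i : ℕ) < k → ∀ s ∈ Icc (-τ) 0, G (x i s) ≤ B)
    (hy : ∀ j, G (y j 0) ≤ B) {t : ℝ} (ht : t ∈ Icc 0 τ) (j : Fin M) : G (y j t) ≤ B := by
  have hGc : Continuous G := continuous_iff_continuousAt.2 fun z ↦ (hG z).continuousAt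
  refine le_of_hasDerivAt_nonpos_at_max (g := fun j s ↦ G (y j s))
    (fun j ↦ hGc.comp (hsol.conty j)) (fun s hs j hB hmax ↦ ?_) hy ht j
  have hM : (1 : ℝ) ≤ M := Nat.one_le_cast.2 j.pos
  have hdelay : s - τ ∈ Icc (-τ) 0 := ⟨by linarith [hs.1], by linarith [hs.2]⟩
  have hGy : ∀ l ∈ Finset.univ.erase j, G' (y j s) (y l s - y j s) ≤ 0 :=
    fun l _ ↦ hG' _ _ (hmax l)
  have hGx : ∀ l ∈ Finset.univ.filter (fun l : Fin N ↦ (l : ℕ) < k),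
      G' (y j s) (x l (s - τ) - y j s) ≤ 0 :=
    fun l hl ↦ hG' _ _ ((hx l (Finset.mem_filter.1 hl).2 _ hdelay).trans hB)
  rcases lt_or_ge (j : ℕ) h with hj | hj
  · refine ⟨_, ?_, (hG _).comp_hasDerivAt s (hsol.odey_lead j hj s hs.1)⟩
    rw [map_add]
    exact add_nonpos
      (map_sum_smul_sub_nonpos _ _ (fun l _ ↦ div_nonneg (hψs _ _) (by linarith)) hGy)
      (map_sum_smul_sub_nonpos _ _ (fun l _ ↦ div_nonneg (hφs _ _) (by linarith)) hGx)
  · exact ⟨_, map_sum_smul_sub_nonpos _ _ (fun l _ ↦ div_nonneg (hψs _ _) (by linarith)) hGy,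
      (hG _).comp_hasDerivAt s (hsol.odey_foll j hj s hs.1)⟩

theorem IsSol.inner_y_le_MInit (hsol : IsSol h k τ ψ ψs φ φs x y)
    (hψs : ∀ z w, 0 ≤ ψs z w) (hφs : ∀ z w, 0 ≤ φs z w) (hτ : 0 ≤ τ)
    (v : EuclideanSpace ℝ (Fin d)) {t : ℝ} (ht : t ∈ Icc 0 τ) (j : Fin M) :
    ⟪y j t, v⟫ ≤ MInit h k τ v x y := by
  have hG : ∀ z, HasFDerivAt (⟪·, v⟫) (innerSL ℝ v) z := fun z ↦ by
    convert (innerSL ℝ v).hasFDerivAt using 1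
    exact funext fun w ↦ by rw [innerSL_apply_apply, real_inner_comm]
  have hG' : ∀ z w : EuclideanSpace ℝ (Fin d), ⟪w, v⟫ ≤ ⟪z, v⟫ → innerSL ℝ v (w - z) ≤ 0 := by
    intro z w hzw
    rw [innerSL_apply_apply, real_inner_comm, inner_sub_left]
    linarith
  have hcont : Continuous (⟪·, v⟫ : EuclideanSpace ℝ (Fin d) → ℝ) := by fun_prop
  rw [MInit_eq_initSup] at *
  exact hsol.y_le_of_quasiconvex hψs hφs hG hG'
    (fun i hi s hs ↦ le_initSup_of_lt hcont hsol.contx hi hs)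
    (le_initSup_zero hcont hsol.conty hτ) ht j

theorem IsSol.norm_y_le_Cinit (hsol : IsSol h k τ ψ ψs φ φs x y)
    (hψs : ∀ z w, 0 ≤ ψs z w) (hφs : ∀ z w, 0 ≤ φs z w) (hτ : 0 ≤ τ)
    {t : ℝ} (ht : t ∈ Icc 0 τ) (j : Fin M) : ‖y j t‖ ≤ Cinit h k τ x y := by
  rw [Cinit_eq_initSup]
  have hC : 0 ≤ initSup (‖·‖) h k τ x y :=
    (norm_nonneg _).trans (le_initSup_zero continuous_norm hsol.conty hτ j)
  have hG' : ∀ z w : EuclideanSpace ℝ (Fin d), ‖w‖ ^ 2 ≤ ‖z‖ ^ 2 →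
      (2 • innerSL ℝ z) (w - z) ≤ 0 := by
    intro z w hzw
    have hwz : ‖w‖ ≤ ‖z‖ := (pow_le_pow_iff_left₀ (norm_nonneg _) (norm_nonneg _) two_ne_zero).1 hzw
    rw [smul_apply, innerSL_apply_apply, inner_sub_right, real_inner_self_eq_norm_sq,
      nsmul_eq_mul, Nat.cast_ofNat]
    nlinarith [real_inner_le_norm z w, mul_le_mul_of_nonneg_left hwz (norm_nonneg z)]
  refine (pow_le_pow_iff_left₀ (norm_nonneg _) hC two_ne_zero).1
    (hsol.y_le_of_quasiconvex hψs hφs (fun z ↦ (hasStrictFDerivAt_norm_sq z).hasFDerivAt) hG'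
      (fun i hi s hs ↦ ?_) (fun j ↦ ?_) ht j)
  · exact pow_le_pow_left₀ (norm_nonneg _) (le_initSup_of_lt continuous_norm hsol.contx hi hs) 2
  · exact pow_le_pow_left₀ (norm_nonneg _) (le_initSup_zero continuous_norm hsol.conty hτ j) 2

theorem IsSol.hasDerivAt_inner_y_le (hsol : IsSol h k τ ψ ψs φ φs x y) {i : Fin M}
    (hi : (i : ℕ) < h) {t : ℝ} (ht : 0 < t) (v : EuclideanSpace ℝ (Fin d)) {Λ Γ B m : ℝ}
    (hψs : ∀ z w, 0 ≤ ψs z w ∧ ψs z w ≤ Λ) (hφs : ∀ z w, 0 ≤ φs z w ∧ φs z w ≤ Λ)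
    (hy : ∀ j, ⟪y j t, v⟫ ≤ B) (hx : ∀ j : Fin N, (j : ℕ) < k → ⟪x j (t - τ), v⟫ ≤ B)
    {L : Fin N} (hL : (L : ℕ) < k) (hxL : ⟪x L (t - τ), v⟫ ≤ (B + m) / 2)
    (hΓ : Γ ≤ φs (y i t) (x L (t - τ))) (hmB : m ≤ B) :
    ∃ D ≤ Λ * (B - ⟪y i t, v⟫) - Γ * (B - m) / (2 * ((M : ℝ) + k - 1)),
      HasDerivAt (fun s ↦ ⟪y i s, v⟫) D t := by
  set n : ℝ := (M : ℝ) + k - 1 with hn_def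
  have hM : (1 : ℝ) ≤ M := Nat.one_le_cast.2 i.pos
  have hk : (1 : ℝ) ≤ k := Nat.one_le_cast.2 (Nat.one_le_of_lt hL)
  have hn : 0 < n := by linarith
  set f := ⟪y i t, v⟫
  have hf : f ≤ B := hy i
  set S := Finset.univ.filter (fun j : Fin N ↦ (j : ℕ) < k)
  have hLS : L ∈ S := by simp [S, hL]
  have hcard_y : ((Finset.univ.erase i).card : ℝ) + 1 = M := by
    exact_mod_cast (Finset.card_erase_add_one (Finset.mem_univ i)).trans (by simp)
  have hcard_x : ((S.erase L).card : ℝ) + 1 ≤ k := by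
    exact_mod_cast (Finset.card_erase_add_one hLS).trans_le
      (Fin.card_filter_val_lt.trans_le (min_le_right _ _))
  have hsum_y := sum_mul_sub_le_card_mul (Finset.univ.erase i)
    (a := fun j ↦ ψs (y i t) (y j t) / n) (w := fun j ↦ ⟪y j t, v⟫)
    (fun j _ ↦ ⟨div_nonneg (hψs _ _).1 hn.le, div_le_div_of_nonneg_right (hψs _ _).2 hn.le⟩)
    (fun j _ ↦ hy j) hf
  have hsum_x := sum_mul_sub_le_card_mul (S.erase L)
    (a := fun j ↦ φs (y i t) (x j (t - τ)) / n) (w := fun j ↦ ⟪x j (t - τ), v⟫)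
    (fun j _ ↦ ⟨div_nonneg (hφs _ _).1 hn.le, div_le_div_of_nonneg_right (hφs _ _).2 hn.le⟩)
    (fun j hj ↦ hx j (Finset.mem_filter.1 (Finset.mem_of_mem_erase hj)).2) hf
  -- the delayed leader `L` sits well below `B`, and this is what pulls `y i` down
  have hterm_L := div_mul_sub_le_of_le_midpoint hn (hφs _ _).1 hΓ (hφs _ _).2 hxL hf hmB
  set X := Λ / n * (B - f) with hX
  have hX0 : 0 ≤ X := mul_nonneg (div_nonneg ((hφs 0 0).1.trans (hφs 0 0).2) hn.le) (by linarith)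
  have hderiv := (hsol.odey_lead i hi t ht).inner ℝ (hasDerivAt_const t v)
  rw [inner_zero_right, zero_add] at hderiv
  refine ⟨_, ?_, hderiv⟩
  simp only [inner_add_left, sum_inner, real_inner_smul_left, inner_sub_left]
  rw [← Finset.add_sum_erase _ _ hLS]
  calc _ ≤ (Finset.univ.erase i).card * X + ((X - Γ * (B - m) / (2 * n)) + (S.erase L).card * X) :=
        add_le_add hsum_y (add_le_add hterm_L hsum_x)
    _ ≤ (M - 1) * X + ((X - Γ * (B - m) / (2 * n)) + (k - 1) * X) := by gcongr <;> linarith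
    _ = n * X - Γ * (B - m) / (2 * n) := by rw [hn_def]; ring
    _ = Λ * (B - f) - Γ * (B - m) / (2 * n) := by rw [hX]; field_simp

theorem IsSol.inner_y_le_of_window (hsol : IsSol h k τ ψ ψs φ φs x y) (hψs : Admissible ψs)
    (hφs : Admissible φs) {i : Fin M} (hi : (i : ℕ) < h) (v : EuclideanSpace ℝ (Fin d))
    {L : Fin N} (hL : (L : ℕ) < k) {m α β : ℝ} (hsub : Icc α β ⊆ Icc (-τ) 0) (hαβ : α ≤ β)
    (hm : m ≤ MInit h k τ v x y)
    (hxL : ∀ t ∈ Icc α β, ⟪x L t, v⟫ ≤ (MInit h k τ v x y + m) / 2) :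
    ⟪y i (β + τ), v⟫ ≤ MInit h k τ v x y -
      Gam h k τ ψ ψs φ φs x y * (MInit h k τ v x y - m) / (2 * ((M : ℝ) + k - 1)) /
        Lam ψ ψs φ φs * (1 - exp (-(Lam ψ ψs φ φs * (β - α)))) := by
  obtain ⟨hατ, -⟩ := hsub (left_mem_Icc.2 hαβ)
  obtain ⟨-, hβ0⟩ := hsub (right_mem_Icc.2 hαβ)
  have hτ : 0 ≤ τ := by linarith
  have hψs' : ∀ z w, 0 ≤ ψs z w ∧ ψs z w ≤ Lam ψ ψs φ φs :=
    fun z w ↦ ⟨(hψs.2.1 z w).le, ψs_le_Lam hψs z w⟩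
  have hφs' : ∀ z w, 0 ≤ φs z w ∧ φs z w ≤ Lam ψ ψs φ φs :=
    fun z w ↦ ⟨(hφs.2.1 z w).le, φs_le_Lam hφs z w⟩
  have hΛ : 0 < Lam ψ ψs φ φs := (hφs.2.1 0 0).trans_le (φs_le_Lam hφs 0 0)
  have hwindow : ∀ s ∈ Icc (α + τ) (β + τ), s ∈ Icc 0 τ :=
    fun s hs ↦ ⟨by linarith [hs.1], by linarith [hs.2]⟩
  have hproj : ∀ s ∈ Icc (α + τ) (β + τ), ∀ j, ⟪y j s, v⟫ ≤ MInit h k τ v x y :=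
    fun s hs ↦ hsol.inner_y_le_MInit (fun z w ↦ (hψs' z w).1) (fun z w ↦ (hφs' z w).1) hτ v
      (hwindow s hs)
  have hderiv : ∀ s ∈ Ioo (α + τ) (β + τ), ∃ D ≤ Lam ψ ψs φ φs * (MInit h k τ v x y - ⟪y i s, v⟫) -
      Gam h k τ ψ ψs φ φs x y * (MInit h k τ v x y - m) / (2 * ((M : ℝ) + k - 1)),
      HasDerivAt (fun s ↦ ⟪y i s, v⟫) D s := by
    intro s hs
    have hs' : s - τ ∈ Icc α β := ⟨by linarith [hs.1], by linarith [hs.2]⟩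
    have hnorm_y : ‖y i s‖ ≤ Cinit h k τ x y :=
      hsol.norm_y_le_Cinit (fun z w ↦ (hψs' z w).1) (fun z w ↦ (hφs' z w).1) hτ
        (hwindow s (Ioo_subset_Icc_self hs)) i
    have hnorm_x : ‖x L (s - τ)‖ ≤ Cinit h k τ x y :=
      le_initSup_of_lt continuous_norm hsol.contx hL (hsub hs')
    exact hsol.hasDerivAt_inner_y_le hi (by linarith [hs.1]) v hψs' hφs'
      (hproj s (Ioo_subset_Icc_self hs))
      (fun j hj ↦ le_initSup_of_lt (G := (⟪·, v⟫)) (by fun_prop) hsol.contx hj (hsub hs'))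
      hL (hxL _ hs') (Gam_le_φs (fun z w ↦ (hφs' z w).1) hnorm_y hnorm_x) hm
  have key := le_sub_mul_one_sub_exp_of_hasDerivAt_le (by linarith : α + τ ≤ β + τ) hΛ.ne'
    ((hsol.conty i).inner continuous_const).continuousOn hderiv
    (hproj _ (left_mem_Icc.2 (by linarith)) i)
  rwa [show β + τ - (α + τ) = β - α by ring] at key

end HegselmannKrause

theorem stmt9_general
    (d N M h k : ℕ)
    (τ : ℝ)
    (ψ ψs φ φs : EuclideanSpace ℝ (Fin d) → EuclideanSpace ℝ (Fin d) → ℝ)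
    (hψs : Admissible ψs) (hφs : Admissible φs)
    (x : Fin N → ℝ → EuclideanSpace ℝ (Fin d)) (y : Fin M → ℝ → EuclideanSpace ℝ (Fin d))
    (hsol : IsSol h k τ ψ ψs φ φs x y)
    (v : EuclideanSpace ℝ (Fin d)) (Λ Γ m₀ M₀ : ℝ)
    (hΛ : Λ = Lam ψ ψs φ φs) (hΓ : Γ = Gam h k τ ψ ψs φ φs x y)
    (hM₀ : M₀ = MInit h k τ v x y)
    (hm₀pos : 0 < m₀) (hm₀M₀ : m₀ ≤ M₀)
    (σ : ℝ) (hσpos : 0 < σ)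
    (L : Fin N) (hLk : (L : ℕ) < k) (α β : ℝ)
    (hsub : Icc α β ⊆ Icc (-τ) 0) (hβα : β - α = σ)
    (hXL : ∀ t ∈ Icc α β, m₀ ≤ ⟪x L t, v⟫ ∧ ⟪x L t, v⟫ ≤ (M₀ + m₀) / 2) (δ₂ : ℝ)
    (hδ₂ : δ₂ = (1 / (2 * ((M : ℝ) + k - 1))) * (Γ / Λ) * (1 - m₀ / M₀) * (1 - Real.exp (-(Λ * σ))))
    :
    ∀ i : Fin M, (i : ℕ) < h → ⟪y i (β + τ), v⟫ ≤ (1 - δ₂) * M₀ := by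
  intro i hi
  subst hΛ hΓ hM₀ hδ₂
  have hM₀ : 0 < MInit h k τ v x y := hm₀pos.trans_le hm₀M₀
  calc ⟪y i (β + τ), v⟫ ≤ _ := hsol.inner_y_le_of_window hψs hφs hi v hLk hsub (by linarith)
        hm₀M₀ fun t ht ↦ (hXL t ht).2
    _ = _ := by rw [hβα]; field_simp

theorem stmt9
    (d N M h k : ℕ) (hd : 1 ≤ d) (hN : 2 ≤ N) (hM2 : 2 ≤ M) (hMN : M ≤ N)
    (hh1 : 1 ≤ h) (hhM : h < M) (hk1 : 1 ≤ k) (hkN : k < N)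
    (τ : ℝ) (hτ : 0 < τ)
    (ψ ψs φ φs : EuclideanSpace ℝ (Fin d) → EuclideanSpace ℝ (Fin d) → ℝ)
    (hψ : Admissible ψ) (hψs : Admissible ψs) (hφ : Admissible φ) (hφs : Admissible φs)
    (x : Fin N → ℝ → EuclideanSpace ℝ (Fin d)) (y : Fin M → ℝ → EuclideanSpace ℝ (Fin d))
    (hsol : IsSol h k τ ψ ψs φ φs x y)
    (v : EuclideanSpace ℝ (Fin d)) (Λ Γ m₀ M₀ : ℝ)
    (hΛ : Λ = Lam ψ ψs φ φs) (hΓ : Γ = Gam h k τ ψ ψs φ φs x y)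
    (hm₀ : m₀ = mInit h k τ v x y) (hM₀ : M₀ = MInit h k τ v x y)
    (hm₀pos : 0 < m₀) (hm₀M₀ : m₀ ≤ M₀)
    (σ : ℝ) (hσpos : 0 < σ) (hσle : σ ≤ min τ ((M₀ - m₀) / (4 * Λ * M₀)))
    (L : Fin N) (hLk : (L : ℕ) < k) (α β : ℝ)
    (hsub : Icc α β ⊆ Icc (-τ) 0) (hβα : β - α = σ)
    (hXL : ∀ t ∈ Icc α β, m₀ ≤ ⟪x L t, v⟫ ∧ ⟪x L t, v⟫ ≤ (M₀ + m₀) / 2) (δ₂ : ℝ)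
    (hδ₂ : δ₂ = (1 / (2 * ((M : ℝ) + k - 1))) * (Γ / Λ) * (1 - m₀ / M₀) * (1 - Real.exp (-(Λ * σ))))
    :
    ∀ i : Fin M, (i : ℕ) < h → ⟪y i (β + τ), v⟫ ≤ (1 - δ₂) * M₀ :=
  stmt9_general d N M h k τ ψ ψs φ φs hψs hφs x y hsol v Λ Γ m₀ M₀ hΛ hΓ hM₀ hm₀pos hm₀M₀ σ hσpos L
    hLk α β hsub hβα hXL δ₂ hδ₂
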